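/- Let x, y be a free basis of F_2 and let ψ_m : F_2 → D_m be the homomorphism to the dihedral group D_m = ⟨t, s | t² = 1, s^m = 1, tst = s⁻¹⟩ sending x ↦ t and y ↦ s. Then the subgroup H_m = ψ_m⁻¹(⟨t⟩) has index m in F_2, and for w_k = x[x,y]^k one has w_k ∈ H_m if and only if m divides 2k; moreover w_k² ∈ H_m for every k ≥ 1. -/

import Mathlib

/-- `R` is a retract of the ambient group: there is an endomorphism with image `R`
restricting to the identity on `R` (equivalently, an idempotent endomorphism with image `R`). -/
def IsRetract {G : Type*} [Group G] (R : Subgroup G) : Prop :=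
  ∃ r : G →* G, r.range = R ∧ ∀ x ∈ R, r x = x

/-- The subgroup `H` is free of rank `m`. -/
def HasFreeRank {G : Type*} [Group G] (H : Subgroup G) (m : ℕ) : Prop :=
  ∃ φ : FreeGroup (Fin m) →* G, Function.Injective φ ∧ φ.range = H

namespace DihedralExample

def x : FreeGroup (Fin 2) := FreeGroup.of 0
def y : FreeGroup (Fin 2) := FreeGroup.of 1

/-- The homomorphism `ψ_m : F₂ → D_m` with `x ↦ t = sr 0` and `y ↦ s = r 1`. -/
def ψ (m : ℕ) : FreeGroup (Fin 2) →* DihedralGroup m :=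
  FreeGroup.lift (fun i => if i = 0 then DihedralGroup.sr 0 else DihedralGroup.r 1)

/-- `H_m = ψ_m⁻¹(⟨t⟩)`. -/
def Hm (m : ℕ) : Subgroup (FreeGroup (Fin 2)) :=
  Subgroup.comap (ψ m) (Subgroup.zpowers (DihedralGroup.sr 0))

open scoped commutatorElement in
def wk (k : ℕ) : FreeGroup (Fin 2) := x * ⁅x, y⁆ ^ k

end DihedralExample

/-!
Everything is computed in `D_m`. Since `ψ_m` is onto, `H_m` has the index of `⟨t⟩` in `D_m`,
namely `|D_m| / 2 = m` (for `m = 0` both sides are `0`, the junk value of an infinite index or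
cardinality). Since `[t, s] = s⁻²`, `ψ_m(w_k)` is the reflection `t s⁻²ᵏ`, which lies in
`⟨t⟩ = {1, t}` iff `s²ᵏ = 1`, and which squares to `1`.
-/

namespace DihedralGroup

variable {n : ℕ}

open scoped commutatorElement in
theorem commutatorElement_sr_r (i j : ZMod n) : ⁅sr i, r j⁆ = r (-2 * j) := by
  rw [commutatorElement_def, inv_sr, inv_r, sr_mul_r, sr_mul_sr, r_mul_r]
  ring_nf

theorem sr_mem_zpowers_sr_iff (i j : ZMod n) : sr j ∈ Subgroup.zpowers (sr i) ↔ j = i := by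
  classical
  have hfin : IsOfFinOrder (sr i) := orderOf_pos_iff.mp (by rw [orderOf_sr]; norm_num)
  rw [hfin.mem_zpowers_iff_mem_range_orderOf, orderOf_sr]
  simp only [Finset.range_add_one, Finset.range_zero, insert_empty_eq, Finset.image_insert,
    pow_one, Finset.image_singleton, pow_zero, Finset.mem_insert, sr.injEq, Finset.mem_singleton,
    or_iff_left_iff_imp]
  rintro ⟨⟩

theorem index_zpowers_sr (i : ZMod n) : (Subgroup.zpowers (sr i)).index = n := by
  have h := (Subgroup.zpowers (sr i)).card_mul_index
  rw [Nat.card_zpowers, orderOf_sr, nat_card] at h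
  omega

end DihedralGroup

namespace DihedralExample

open DihedralGroup

@[simp] theorem ψ_x (m : ℕ) : ψ m x = sr 0 := by simp [ψ, x]

@[simp] theorem ψ_y (m : ℕ) : ψ m y = r 1 := by simp [ψ, y]

theorem ψ_surjective (m : ℕ) : Function.Surjective (ψ m) := by
  rintro (a | a)
  · refine ⟨y ^ (a.cast : ℤ), ?_⟩
    rw [map_zpow, ψ_y, r_one_zpow, ZMod.intCast_zmod_cast]
  · refine ⟨x * y ^ (a.cast : ℤ), ?_⟩
    rw [map_mul, map_zpow, ψ_x, ψ_y, r_one_zpow, ZMod.intCast_zmod_cast, sr_mul_r, zero_add]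

theorem ψ_wk (m k : ℕ) : ψ m (wk k) = sr (-((2 * k : ℕ) : ZMod m)) := by
  rw [wk, map_mul, map_pow, map_commutatorElement, ψ_x, ψ_y, commutatorElement_sr_r, r_pow,
    sr_mul_r]
  push_cast
  ring_nf

theorem dihedral_example_general (m : ℕ) :
    (Hm m).index = m ∧ (∀ k : ℕ, wk k ∈ Hm m ↔ m ∣ 2 * k) ∧
      (∀ k : ℕ, 1 ≤ k → (wk k) ^ 2 ∈ Hm m) := by
  refine ⟨?_, fun k => ?_, fun k _ => ?_⟩
  · rw [Hm, Subgroup.index_comap_of_surjective _ (ψ_surjective m), index_zpowers_sr]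
  · rw [Hm, Subgroup.mem_comap, ψ_wk, sr_mem_zpowers_sr_iff, neg_eq_zero,
      ZMod.natCast_eq_zero_iff]
  · rw [Hm, Subgroup.mem_comap, map_pow, ψ_wk, pow_two, sr_mul_self]
    exact one_mem _

theorem dihedral_example (m : ℕ) (hm : 1 ≤ m) :
    (Hm m).index = m ∧ (∀ k : ℕ, wk k ∈ Hm m ↔ m ∣ 2 * k) ∧
      (∀ k : ℕ, 1 ≤ k → (wk k) ^ 2 ∈ Hm m) :=
  dihedral_example_general m

end DihedralExample
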